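/- arXiv:0707.1411 — 2 statements merged into one kernel-verified Lean document; each statement's English description precedes it below -/
import Mathlib

section
/- Let K be a pure, strongly connected simplicial complex and fix a facet σ₀. Two labeled facets (σ, v) and (τ, w) (where v is a vertex of σ and w a vertex of τ) lie in the same connected component of the partial unfolding of K if and only if there exists a facet path γ from σ to τ with ⟨γ⟩(v) = w. Consequently, the connected components of the partial unfolding of K are in bijection with the orbits of the action of the group of projectivities Π(K, σ₀) on the vertex set V(σ₀). -/
open Finset

variable {V : Type*} [DecidableEq V]

/-- A (finite abstract) simplicial complex: faces are nonempty and closed under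
nonempty subsets. -/
def IsComplex (K : Finset (Finset V)) : Prop :=
  ∀ f ∈ K, f.Nonempty ∧ ∀ g, g ⊆ f → g.Nonempty → g ∈ K

/-- `K` is pure of dimension `d`: every face is contained in a face with `d+1` vertices. -/
def IsPure (K : Finset (Finset V)) (d : ℕ) : Prop :=
  ∀ f ∈ K, ∃ σ ∈ K, f ⊆ σ ∧ σ.card = d + 1

/-- A facet of a pure `d`-complex: a face with `d+1` vertices. -/
def IsFacet (K : Finset (Finset V)) (d : ℕ) (σ : Finset V) : Prop :=
  σ ∈ K ∧ σ.card = d + 1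

/-- Two facets are neighboring if they share a ridge (codimension-1 face). -/
def Neighboring (K : Finset (Finset V)) (d : ℕ) (σ τ : Finset V) : Prop :=
  IsFacet K d σ ∧ IsFacet K d τ ∧ (σ ∩ τ).card = d

/-- The perspectivity `⟨σ,τ⟩` between neighboring facets: it fixes the common
vertices and sends the vertex `σ \ τ` to the vertex `τ \ σ`. -/
noncomputable def persp (σ τ : Finset V) (v : V) : V :=
  if v ∈ τ then v else if h : (τ \ σ).Nonempty then h.choose else v

/-- The projectivity along a facet path: the composition of consecutive perspectivities. -/
noncomputable def projAlong : List (Finset V) → V → V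
  | [] => id
  | [_] => id
  | σ :: τ :: rest => fun v => projAlong (τ :: rest) (persp σ τ v)

/-- A facet path: a nonempty sequence of facets in which consecutive facets share a ridge. -/
def IsFacetPath (K : Finset (Finset V)) (d : ℕ) (γ : List (Finset V)) : Prop :=
  γ ≠ [] ∧ (∀ σ ∈ γ, IsFacet K d σ) ∧ γ.Chain' (fun σ τ => (σ ∩ τ).card = d)

/-- `K` is strongly connected: any two facets are joined by a facet path. -/
def StronglyConnected (K : Finset (Finset V)) (d : ℕ) : Prop :=
  ∀ σ τ, IsFacet K d σ → IsFacet K d τ →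
    ∃ γ, IsFacetPath K d γ ∧ γ.head? = some σ ∧ γ.getLast? = some τ

/-- `K` is locally strongly connected: the star of every face is strongly connected. -/
def LocallyStronglyConnected (K : Finset (Finset V)) (d : ℕ) : Prop :=
  ∀ f ∈ K, ∀ σ τ, IsFacet K d σ → IsFacet K d τ → f ⊆ σ → f ⊆ τ →
    ∃ γ, IsFacetPath K d γ ∧ γ.head? = some σ ∧ γ.getLast? = some τ ∧ ∀ ρ ∈ γ, f ⊆ ρ

/-- The vertex set of a complex. -/
def vertexSet (K : Finset (Finset V)) : Finset V := K.biUnion id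

/-- A proper coloring of the 1-skeleton of `K`: the endpoints of every edge
(2-element face) receive distinct colors. -/
def ProperColoring {α : Type*} (K : Finset (Finset V)) (c : V → α) : Prop :=
  ∀ v w, v ≠ w → ({v, w} : Finset V) ∈ K → c v ≠ c w

/-- A codimension-2 face `f` is odd if its link graph is not 2-colorable (not bipartite). -/
def OddFace (K : Finset (Finset V)) (f : Finset V) : Prop :=
  ¬ ∃ b : V → Bool, ∀ w w', w ∉ f → w' ∉ f → w ≠ w' →
      f ∪ {w, w'} ∈ K → b w ≠ b w'

/-- Stellar subdivision of the edge `e` of `K` by the new vertex `u`: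
faces not containing `e` are kept; every face containing `e` is replaced by the
cones of `u` over the faces of its boundary not containing `e`. -/
def stellarSub (K : Finset (Finset V)) (e : Finset V) (u : V) : Finset (Finset V) :=
  K.filter (fun f => ¬ e ⊆ f) ∪
    (K.filter fun f => e ⊆ f).biUnion fun f =>
      e.biUnion fun x => ((f.erase x).powerset).image fun g => insert u g

/-- `EdgeSubdivSeq K K'` : `K'` is obtained from `K` by a finite sequence of stellar
subdivisions of edges (each subdividing vertex being a fresh vertex). -/
inductive EdgeSubdivSeq : Finset (Finset V) → Finset (Finset V) → Prop
  | refl (K : Finset (Finset V)) : EdgeSubdivSeq K K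
  | step (K L : Finset (Finset V)) (e : Finset V) (u : V) :
      EdgeSubdivSeq K L → e ∈ L → e.card = 2 → u ∉ vertexSet L →
      EdgeSubdivSeq K (stellarSub L e u)

/-- A boundary ridge: a `(d-1)`-dimensional face contained in exactly one facet. -/
def IsBoundaryRidge (K : Finset (Finset V)) (d : ℕ) (g : Finset V) : Prop :=
  g ∈ K ∧ g.card = d ∧ (K.filter fun τ => τ.card = d + 1 ∧ g ⊆ τ).card = 1

/-- Adjacency of labeled facets in the partial unfolding: `(σ,v)` and `(τ,w)` are glued
along their common ridge iff `σ, τ` are neighboring facets and `⟨σ,τ⟩(v) = w`. -/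
def unfAdj (K : Finset (Finset V)) (d : ℕ) (p q : Finset V × V) : Prop :=
  Neighboring K d p.1 q.1 ∧ p.2 ∈ p.1 ∧ q.2 ∈ q.1 ∧ persp p.1 q.1 p.2 = q.2

/-- Reachability (connected components) in the partial unfolding. -/
def UnfReach (K : Finset (Finset V)) (d : ℕ) : Finset V × V → Finset V × V → Prop :=
  Relation.ReflTransGen fun p q => unfAdj K d p q ∨ unfAdj K d q p

/-!
Following the perspectivities along a facet path `γ` from `(σ, v)` is a walk in the partial
unfolding ending at `(τ, ⟨γ⟩(v))`. Conversely, a walk in the unfolding projects to a facet path,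
and its labels are carried along by the perspectivities; edges traversed backwards cause no
trouble because the perspectivity between neighboring facets is inverted by the reverse one.
-/

section Perspectivity

variable {σ τ : Finset V} {v : V}

theorem persp_mem (h : (τ \ σ).Nonempty) : persp σ τ v ∈ τ := by
  unfold persp
  split_ifs with hv
  · exact hv
  · exact (mem_sdiff.mp h.choose_spec).1

theorem persp_persp (h : (σ \ τ).card ≤ 1) (hv : v ∈ σ) : persp τ σ (persp σ τ v) = v := by
  by_cases hvτ : v ∈ τ
  · simp only [persp, if_pos hvτ, if_pos hv]
  have hvστ : v ∈ σ \ τ := mem_sdiff.mpr ⟨hv, hvτ⟩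
  have hστ : (σ \ τ).Nonempty := ⟨v, hvστ⟩
  by_cases hne : (τ \ σ).Nonempty
  · have hw : persp σ τ v = hne.choose := by rw [persp, if_neg hvτ, dif_pos hne]
    rw [hw, persp, if_neg (mem_sdiff.mp hne.choose_spec).2, dif_pos hστ]
    exact card_le_one.mp h _ hστ.choose_spec _ hvστ
  · have hw : persp σ τ v = v := by rw [persp, if_neg hvτ, dif_neg hne]
    rw [hw, persp, if_pos hv]

theorem projAlong_concat (γ : List (Finset V)) (hne : γ ≠ []) (τ : Finset V) (v : V) :
    projAlong (γ ++ [τ]) v = persp (γ.getLast hne) τ (projAlong γ v) := by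
  induction γ generalizing v with
  | nil => exact absurd rfl hne
  | cons σ rest ih =>
    cases rest with
    | nil => rfl
    | cons ρ rest' =>
      rw [List.getLast_cons (List.cons_ne_nil _ _)]
      exact ih (List.cons_ne_nil _ _) (persp σ ρ v)

end Perspectivity

section Unfolding

variable {K : Finset (Finset V)} {d : ℕ} {σ τ : Finset V}

theorem Neighboring.symm (h : Neighboring K d σ τ) : Neighboring K d τ σ :=
  ⟨h.2.1, h.1, by rw [inter_comm]; exact h.2.2⟩

theorem Neighboring.card_sdiff (h : Neighboring K d σ τ) : (τ \ σ).card = 1 := by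
  rw [Finset.card_sdiff, h.2.1.2, h.2.2]
  omega

theorem Neighboring.unfAdj (h : Neighboring K d σ τ) {v : V} (hv : v ∈ σ) :
    unfAdj K d (σ, v) (τ, persp σ τ v) :=
  ⟨h, hv, persp_mem (card_pos.mp (h.card_sdiff ▸ Nat.one_pos)), rfl⟩

theorem unfAdj.symm {p q : Finset V × V} (h : unfAdj K d p q) : unfAdj K d q p :=
  let ⟨hpq, hp, hq, hpersp⟩ := h
  ⟨hpq.symm, hq, hp, hpersp ▸ persp_persp hpq.symm.card_sdiff.le hp⟩

theorem IsFacetPath.concat {γ : List (Finset V)} (hγ : IsFacetPath K d γ)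
    (hlast : γ.getLast? = some σ) (hστ : Neighboring K d σ τ) :
    IsFacetPath K d (γ ++ [τ]) := by
  obtain ⟨-, hfacet, hchain⟩ := hγ
  refine ⟨List.concat_ne_nil _ _, ?_, hchain.append (.singleton τ) ?_⟩
  · simpa only [List.mem_append, List.mem_singleton, or_imp, forall_and, forall_eq]
      using ⟨hfacet, hστ.2.1⟩
  · simpa only [hlast, Option.mem_def, Option.some.injEq, List.head?_cons, forall_eq']
      using hστ.2.2

theorem unfReach_projAlong {γ : List (Finset V)} (hγ : IsFacetPath K d γ)
    (hhead : γ.head? = some σ) (hlast : γ.getLast? = some τ) {v : V} (hv : v ∈ σ) :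
    UnfReach K d (σ, v) (τ, projAlong γ v) := by
  obtain ⟨-, hfacet, hchain⟩ := hγ
  induction γ generalizing σ v with
  | nil => cases hhead
  | cons σ' rest ih =>
    obtain rfl : σ' = σ := Option.some_inj.mp hhead
    cases rest with
    | nil =>
      obtain rfl : σ' = τ := Option.some_inj.mp hlast
      exact .refl
    | cons ρ rest =>
      obtain ⟨hσρ, hchain⟩ := List.isChain_cons_cons.mp hchain
      have hstep : Neighboring K d σ' ρ := ⟨hfacet _ (by simp), hfacet _ (by simp), hσρ⟩
      have hadj := hstep.unfAdj hv
      exact .head (Or.inl hadj) <| ih rfl (by rwa [List.getLast?_cons_cons] at hlast)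
        hadj.2.2.1 (fun ρ' hρ' => hfacet ρ' (List.mem_cons_of_mem _ hρ')) hchain

theorem exists_facetPath_of_unfReach {p q : Finset V × V} (h : UnfReach K d p q)
    (hp : IsFacet K d p.1) :
    ∃ γ, IsFacetPath K d γ ∧ γ.head? = some p.1 ∧ γ.getLast? = some q.1 ∧
      projAlong γ p.2 = q.2 := by
  induction h with
  | refl => exact ⟨[p.1], ⟨List.cons_ne_nil _ _, by simpa using hp, .singleton _⟩, rfl, rfl, rfl⟩
  | @tail m q _ hmq ih =>
    obtain ⟨γ, hγ, hhead, hlast, hproj⟩ := ih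
    obtain ⟨hmq, -, -, hpersp⟩ := hmq.elim id unfAdj.symm
    have hne : γ ≠ [] := hγ.1
    refine ⟨γ ++ [q.1], hγ.concat hlast hmq, ?_, List.getLast?_concat .., ?_⟩
    · rw [List.head?_append_of_ne_nil _ hne, hhead]
    · rw [projAlong_concat γ hne, List.getLast_of_getLast?_eq_some hlast, hproj, hpersp]

theorem unfReach_iff_exists_facetPath (hσ : IsFacet K d σ) {v w : V} (hv : v ∈ σ) :
    UnfReach K d (σ, v) (τ, w) ↔
      ∃ γ, IsFacetPath K d γ ∧ γ.head? = some σ ∧ γ.getLast? = some τ ∧ projAlong γ v = w :=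
  ⟨fun h => exists_facetPath_of_unfReach h hσ,
    fun ⟨_, hγ, hhead, hlast, hproj⟩ => hproj ▸ unfReach_projAlong hγ hhead hlast hv⟩

end Unfolding

theorem unfolding_components_general
    (K : Finset (Finset V)) (d : ℕ)
    (σ₀ : Finset V) (h0 : IsFacet K d σ₀) :
    (∀ σ τ v w, IsFacet K d σ → IsFacet K d τ → v ∈ σ → w ∈ τ →
      (UnfReach K d (σ, v) (τ, w) ↔
        ∃ γ, IsFacetPath K d γ ∧ γ.head? = some σ ∧ γ.getLast? = some τ ∧
          projAlong γ v = w)) ∧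
    (∀ v ∈ σ₀, ∀ w ∈ σ₀,
      UnfReach K d (σ₀, v) (σ₀, w) ↔
        ∃ γ, IsFacetPath K d γ ∧ γ.head? = some σ₀ ∧ γ.getLast? = some σ₀ ∧
          projAlong γ v = w) :=
  ⟨fun _ _ _ _ hσ _ hv _ => unfReach_iff_exists_facetPath hσ hv,
    fun _ hv _ _ => unfReach_iff_exists_facetPath h0 hv⟩

/-- Two labeled facets `(σ,v)`, `(τ,w)` lie in the same connected
component of the partial unfolding iff there is a facet path `γ` from `σ` to `τ` with
`⟨γ⟩(v) = w`; consequently the components correspond to the orbits of `Π(K,σ₀)`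
on `V(σ₀)`. -/
theorem unfolding_components
    (K : Finset (Finset V)) (d : ℕ) (hK : IsComplex K) (hpure : IsPure K d)
    (hconn : StronglyConnected K d)
    (σ₀ : Finset V) (h0 : IsFacet K d σ₀) :
    (∀ σ τ v w, IsFacet K d σ → IsFacet K d τ → v ∈ σ → w ∈ τ →
      (UnfReach K d (σ, v) (τ, w) ↔
        ∃ γ, IsFacetPath K d γ ∧ γ.head? = some σ ∧ γ.getLast? = some τ ∧
          projAlong γ v = w)) ∧
    (∀ v ∈ σ₀, ∀ w ∈ σ₀,
      UnfReach K d (σ₀, v) (σ₀, w) ↔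
        ∃ γ, IsFacetPath K d γ ∧ γ.head? = some σ₀ ∧ γ.getLast? = some σ₀ ∧
          projAlong γ v = w) :=
  unfolding_components_general K d σ₀ h0
end

section
/- Performing two successive stellar subdivisions on an edge e of a simplicial complex K — first subdividing e by a new vertex u, then subdividing one of the two resulting half-edges by a new vertex — yields a complex isomorphic to one obtained by subdividing e into a path of three edges, and in a combinatorial manifold this double subdivision restores the parity of every codimension-2 face of lk_K(e): each codimension-2 face f of K with f ∪ e a facet has the same parity (odd/even) in the resulting complex as in K. -/
open Finset

variable {V : Type*} [DecidableEq V]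

/-!
Faces avoiding both new vertices are exactly the faces of `K` not containing `e`. For the parity
claim write `e = {x, y}` and let `f ∪ e` be a facet. Since no face strictly contains a facet, the
vertex subdividing an edge `e` with `f ∪ e` a facet is joined in the link graph of `f` only to
the two ends of `e`. Hence the double subdivision replaces the edge `xy` of the link graph of `f`
by the path `x u' u y` and changes nothing else, and replacing an edge by a path of odd length
does not affect 2-colourability.
-/

lemma pair_subset_union_pair_iff {f : Finset V} {v w x y : V} (hx : x ∉ f) (hy : y ∉ f)
    (hxy : x ≠ y) : {x, y} ⊆ f ∪ {v, w} ↔ s(v, w) = s(x, y) := by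
  simp only [insert_subset_iff, singleton_subset_iff, mem_union, mem_insert, mem_singleton,
    hx, hy, false_or, Sym2.eq_iff]
  grind

lemma exists_eq_pair_of_mem {e : Finset V} {x : V} (hx : x ∈ e) (he : e.card = 2) :
    ∃ y, x ≠ y ∧ e = {x, y} := by
  obtain ⟨y, hy⟩ := card_eq_one.1 (by rw [card_erase_of_mem hx, he] : (e.erase x).card = 1)
  refine ⟨y, fun h => ?_, by rw [← insert_erase hx, hy]⟩
  simpa [h] using hy.ge (mem_singleton_self y)

section StellarSubdivision

variable {K : Finset (Finset V)} {d : ℕ} {e e' g σ τ : Finset V} {u u' v w : V}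

lemma mem_stellarSub :
    g ∈ stellarSub K e u ↔ (g ∈ K ∧ ¬ e ⊆ g) ∨
      ∃ σ ∈ K, e ⊆ σ ∧ ∃ z ∈ e, ∃ h ⊆ σ.erase z, g = insert u h := by
  simp only [stellarSub, mem_union, mem_filter, mem_biUnion, mem_image, mem_powerset]
  grind

lemma mem_stellarSub_of_notMem (hug : u ∉ g) : g ∈ stellarSub K e u ↔ g ∈ K ∧ ¬ e ⊆ g := by
  rw [mem_stellarSub, or_iff_left]
  rintro ⟨-, -, -, -, -, h, -, rfl⟩
  exact hug (mem_insert_self u h)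

lemma insert_mem_stellarSub (hσ : σ ∈ K) (heσ : e ⊆ σ) (hgσ : g ⊆ σ) (heg : ¬ e ⊆ g) :
    insert u g ∈ stellarSub K e u := by
  obtain ⟨z, hze, hzg⟩ := not_subset.1 heg
  exact mem_stellarSub.2 <| .inr ⟨σ, hσ, heσ, z, hze, g, subset_erase.2 ⟨hgσ, hzg⟩, rfl⟩

lemma notMem_of_notMem_vertexSet (hu : u ∉ vertexSet K) (hg : g ∈ K) : u ∉ g :=
  fun h => hu (mem_biUnion.2 ⟨g, hg, h⟩)

lemma exists_erase_subset_of_mem_stellarSub (hu : u ∉ vertexSet K) (hg : g ∈ stellarSub K e u)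
    (hug : u ∈ g) : ∃ σ ∈ K, e ⊆ σ ∧ g.erase u ⊆ σ := by
  rcases mem_stellarSub.1 hg with ⟨hgK, -⟩ | ⟨σ, hσ, heσ, z, -, h, hh, rfl⟩
  · exact absurd hug (notMem_of_notMem_vertexSet hu hgK)
  · exact ⟨σ, hσ, heσ, (erase_insert_subset u h).trans (hh.trans (erase_subset z σ))⟩

lemma vertexSet_subset_vertexSet_stellarSub (he : e.Nontrivial) :
    vertexSet K ⊆ vertexSet (stellarSub K e u) := by
  intro v hv
  obtain ⟨g, hg, hvg⟩ := mem_biUnion.1 hv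
  by_cases heg : e ⊆ g
  · obtain ⟨z, hze, hzv⟩ := he.exists_ne v
    have hmem : insert u (g.erase z) ∈ stellarSub K e u :=
      insert_mem_stellarSub hg heg (erase_subset z g) fun h => notMem_erase z g (h hze)
    exact mem_biUnion.2 ⟨_, hmem, mem_insert_of_mem (mem_erase.2 ⟨hzv.symm, hvg⟩)⟩
  · exact mem_biUnion.2 ⟨g, mem_stellarSub.2 (.inl ⟨hg, heg⟩), hvg⟩

lemma card_le_of_mem_stellarSub (hK : ∀ σ ∈ K, σ.card ≤ d + 1) (hg : g ∈ stellarSub K e u) :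
    g.card ≤ d + 1 := by
  rcases mem_stellarSub.1 hg with ⟨hgK, -⟩ | ⟨σ, hσ, heσ, z, hze, h, hh, rfl⟩
  · exact hK g hgK
  · calc (insert u h).card ≤ h.card + 1 := card_insert_le u h
      _ ≤ (σ.erase z).card + 1 := by gcongr
      _ = σ.card := card_erase_add_one (heσ hze)
      _ ≤ d + 1 := hK σ hσ

lemma mem_of_insert_subset (hK : ∀ σ ∈ K, σ.card ≤ d + 1) (hσ : σ ∈ K)
    (hτ : τ.card = d + 1) (h : insert w τ ⊆ σ) : w ∈ τ := by
  by_contra hw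
  have := (card_le_card h).trans (hK σ hσ)
  rw [card_insert_of_notMem hw] at this
  omega

lemma filter_stellarSub_stellarSub (hu : u ∉ vertexSet K)
    (hu' : u' ∉ vertexSet (stellarSub K e u)) (hue' : u ∈ e') :
    (stellarSub (stellarSub K e u) e' u').filter (fun g => u ∉ g ∧ u' ∉ g) =
      K.filter fun g => ¬ e ⊆ g := by
  ext g
  simp only [mem_filter]
  constructor
  · rintro ⟨hg, hug, hu'g⟩
    rw [mem_stellarSub_of_notMem hu'g, mem_stellarSub_of_notMem hug] at hg
    exact hg.1
  · rintro ⟨hg, heg⟩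
    have hug := notMem_of_notMem_vertexSet hu hg
    have hg₁ : g ∈ stellarSub K e u := (mem_stellarSub_of_notMem hug).2 ⟨hg, heg⟩
    have hu'g := notMem_of_notMem_vertexSet hu' hg₁
    exact ⟨(mem_stellarSub_of_notMem hu'g).2 ⟨hg₁, fun h => hug (h hue')⟩, hug, hu'g⟩

end StellarSubdivision

namespace SimpleGraph

variable {G H : SimpleGraph V} {x y u u' : V}

theorem nonempty_coloring_bool_iff_of_replace_edge_by_path (hxy : G.Adj x y)
    (hGu : ∀ w, ¬ G.Adj u w) (hGu' : ∀ w, ¬ G.Adj u' w)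
    (hH : ∀ v w, v ≠ u → v ≠ u' → w ≠ u → w ≠ u' → (H.Adj v w ↔ G.Adj v w ∧ s(v, w) ≠ s(x, y)))
    (hHu : ∀ w, H.Adj u w ↔ w = y ∨ w = u') (hHu' : ∀ w, H.Adj u' w ↔ w = x ∨ w = u) :
    Nonempty (H.Coloring Bool) ↔ Nonempty (G.Coloring Bool) := by
  have hxu : x ≠ u := fun h => hGu y (h ▸ hxy)
  have hxu' : x ≠ u' := fun h => hGu' y (h ▸ hxy)
  have hyu : y ≠ u := fun h => hGu x (h ▸ hxy.symm)
  have hyu' : y ≠ u' := fun h => hGu' x (h ▸ hxy.symm)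
  have huu' : u ≠ u' := ((hHu' u).2 (.inr rfl)).ne.symm
  constructor
  · rintro ⟨c⟩
    have hcxy : c x ≠ c y := by
      have h₁ := c.valid ((hHu' x).2 (.inl rfl))
      have h₂ := c.valid ((hHu' u).2 (.inr rfl))
      have h₃ := c.valid ((hHu y).2 (.inl rfl))
      revert h₁ h₂ h₃; cases c x <;> cases c u <;> cases c u' <;> cases c y <;> decide
    refine ⟨.mk c fun {v w} hvw => ?_⟩
    by_cases hs : s(v, w) = s(x, y)
    · rcases Sym2.eq_iff.1 hs with ⟨rfl, rfl⟩ | ⟨rfl, rfl⟩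
      exacts [hcxy, hcxy.symm]
    · exact c.valid ((hH v w (fun h => hGu w (h ▸ hvw)) (fun h => hGu' w (h ▸ hvw))
        (fun h => hGu v (h ▸ hvw.symm)) (fun h => hGu' v (h ▸ hvw.symm))).2 ⟨hvw, hs⟩)
  · rintro ⟨c⟩
    let c' : V → Bool := fun v => if v = u then c x else if v = u' then !c x else c v
    have hnew : ∀ v w, H.Adj v w → v = u ∨ v = u' → c' v ≠ c' w := by
      rintro v w hvw (rfl | rfl)
      · rcases (hHu w).1 hvw with rfl | rfl
        · simpa [c', hyu, hyu'] using c.valid hxy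
        · simp [c', huu'.symm]
      · rcases (hHu' w).1 hvw with rfl | rfl
        · simp [c', huu'.symm, hxu, hxu']
        · simp [c', huu'.symm]
    refine ⟨.mk c' fun {v w} hvw => ?_⟩
    by_cases hv : v = u ∨ v = u'
    · exact hnew v w hvw hv
    by_cases hw : w = u ∨ w = u'
    · exact (hnew w v hvw.symm hw).symm
    push Not at hv hw
    simpa [c', hv, hw] using c.valid ((hH v w hv.1 hv.2 hw.1 hw.2).1 hvw).1

end SimpleGraph

def linkGraph (K : Finset (Finset V)) (f : Finset V) : SimpleGraph V where
  Adj v w := v ≠ w ∧ v ∉ f ∧ w ∉ f ∧ f ∪ {v, w} ∈ K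
  symm := ⟨fun v w ⟨hvw, hv, hw, h⟩ => ⟨hvw.symm, hw, hv, pair_comm v w ▸ h⟩⟩
  loopless := ⟨fun _ h => h.1 rfl⟩

section LinkGraph

variable {K : Finset (Finset V)} {d : ℕ} {e f : Finset V} {u v w : V}

@[simp]
lemma linkGraph_adj : (linkGraph K f).Adj v w ↔ v ≠ w ∧ v ∉ f ∧ w ∉ f ∧ f ∪ {v, w} ∈ K :=
  Iff.rfl

lemma oddFace_iff : OddFace K f ↔ ¬ Nonempty ((linkGraph K f).Coloring Bool) :=
  not_congr ⟨fun ⟨b, hb⟩ => ⟨.mk b fun ⟨hvw, hv, hw, h⟩ => hb _ _ hv hw hvw h⟩,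
    fun ⟨c⟩ => ⟨c, fun _ _ hv hw hvw h => c.valid (linkGraph_adj.2 ⟨hvw, hv, hw, h⟩)⟩⟩

lemma linkGraph_not_adj (hu : u ∉ vertexSet K) : ¬ (linkGraph K f).Adj u w :=
  fun h => notMem_of_notMem_vertexSet hu (linkGraph_adj.1 h).2.2.2 (by simp)

lemma linkGraph_stellarSub_adj_iff (huf : u ∉ f) (hv : v ≠ u) (hw : w ≠ u) :
    (linkGraph (stellarSub K e u) f).Adj v w ↔ (linkGraph K f).Adj v w ∧ ¬ e ⊆ f ∪ {v, w} := by
  have hu : u ∉ f ∪ {v, w} := by simp [huf, hv.symm, hw.symm]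
  simp only [linkGraph_adj, mem_stellarSub_of_notMem hu]
  tauto

lemma linkGraph_stellarSub_adj_self_iff (hK : ∀ σ ∈ K, σ.card ≤ d + 1) (hu : u ∉ vertexSet K)
    (hf : f ∪ e ∈ K) (hcard : (f ∪ e).card = d + 1) (hfe : Disjoint f e) (he : e.Nontrivial) :
    (linkGraph (stellarSub K e u) f).Adj u w ↔ w ∈ e := by
  have hu_fe : u ∉ f ∪ e := notMem_of_notMem_vertexSet hu hf
  have huf : u ∉ f := fun h => hu_fe (mem_union_left e h)
  rw [linkGraph_adj]
  constructor
  · rintro ⟨huw, -, hwf, h⟩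
    obtain ⟨σ, hσ, heσ, hσ'⟩ := exists_erase_subset_of_mem_stellarSub hu h (by simp)
    have hsub : insert w (f ∪ e) ⊆ σ := by
      refine insert_subset (hσ' ?_) (union_subset ((fun v hv => ?_)) heσ)
      · simp [huw.symm]
      · exact hσ' (mem_erase.2 ⟨fun h => huf (h ▸ hv), mem_union_left _ hv⟩)
    simpa [hwf] using mem_of_insert_subset hK hσ hcard hsub
  · intro hwe
    have hwf : w ∉ f := disjoint_right.1 hfe hwe
    obtain ⟨z, hze, hzw⟩ := he.exists_ne w
    have hmem : insert u (f ∪ {w}) ∈ stellarSub K e u := by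
      refine insert_mem_stellarSub hf subset_union_right (union_subset_union_right (by simpa)) ?_
      intro h
      simpa [hzw, disjoint_right.1 hfe hze] using h hze
    refine ⟨fun h => hu_fe (h ▸ mem_union_right f hwe), huf, hwf, ?_⟩
    convert hmem using 1
    ext; simp

lemma linkGraph_stellarSub_stellarSub_adj_iff {x y u' : V} (hK : ∀ σ ∈ K, σ.card ≤ d + 1)
    (hu : u ∉ vertexSet K) (hu' : u' ∉ vertexSet (stellarSub K {x, y} u)) (hxy : x ≠ y)
    (hf : f ∪ {x, y} ∈ K) (hcard : (f ∪ {x, y}).card = d + 1) (hfe : Disjoint f {x, y}) :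
    (linkGraph (stellarSub (stellarSub K {x, y} u) {x, u} u') f).Adj u' w ↔ w = x ∨ w = u := by
  have hxf : x ∉ f := disjoint_right.1 hfe (by simp)
  have hu_fe : u ∉ f ∪ {x, y} := notMem_of_notMem_vertexSet hu hf
  have huf : u ∉ f := fun h => hu_fe (mem_union_left _ h)
  have hxu : x ≠ u := fun h => hu_fe (by simp [h])
  have hf₁ : f ∪ {x, u} ∈ stellarSub K {x, y} u := by
    have := (linkGraph_stellarSub_adj_self_iff (w := x) hK hu hf hcard hfe
      ⟨x, by simp, y, by simp, hxy⟩).2 (by simp)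
    exact pair_comm u x ▸ (linkGraph_adj.1 this).2.2.2
  have hcard₁ : (f ∪ {x, u}).card = d + 1 := by
    rw [← hcard, card_union_of_disjoint hfe, card_union_of_disjoint (by simp [hxf, huf]),
      card_pair hxy, card_pair hxu]
  simpa using linkGraph_stellarSub_adj_self_iff (fun σ hσ => card_le_of_mem_stellarSub hK hσ)
    hu' hf₁ hcard₁ (by simp [hxf, huf]) ⟨x, by simp, u, by simp, hxu⟩

lemma nonempty_coloring_linkGraph_stellarSub_stellarSub_iff {x y u' : V}
    (hK : ∀ σ ∈ K, σ.card ≤ d + 1) (hu : u ∉ vertexSet K)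
    (hu' : u' ∉ vertexSet (stellarSub K {x, y} u)) (hxy : x ≠ y) (hf : f ∪ {x, y} ∈ K)
    (hcard : (f ∪ {x, y}).card = d + 1) (hfe : Disjoint f {x, y}) :
    Nonempty ((linkGraph (stellarSub (stellarSub K {x, y} u) {x, u} u') f).Coloring Bool) ↔
      Nonempty ((linkGraph K f).Coloring Bool) := by
  have he : ({x, y} : Finset V).Nontrivial := ⟨x, by simp, y, by simp, hxy⟩
  have hu'K : u' ∉ vertexSet K := fun h => hu' (vertexSet_subset_vertexSet_stellarSub he h)
  have hxf : x ∉ f := disjoint_right.1 hfe (by simp)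
  have hyf : y ∉ f := disjoint_right.1 hfe (by simp)
  have hu_fe : u ∉ f ∪ {x, y} := notMem_of_notMem_vertexSet hu hf
  have huf : u ∉ f := fun h => hu_fe (mem_union_left _ h)
  have hxu : x ≠ u := fun h => hu_fe (by simp [h])
  have hu'f : u' ∉ f := fun h => hu'K (mem_biUnion.2 ⟨_, hf, mem_union_left _ h⟩)
  have hadj₂ (w : V) := linkGraph_stellarSub_stellarSub_adj_iff (w := w) hK hu hu' hxy hf hcard hfe
  have huu' : u ≠ u' := ((hadj₂ u).2 (.inr rfl)).ne.symm
  refine SimpleGraph.nonempty_coloring_bool_iff_of_replace_edge_by_path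
    (linkGraph_adj.2 ⟨hxy, hxf, hyf, hf⟩) (fun _ => linkGraph_not_adj hu)
    (fun _ => linkGraph_not_adj hu'K) (fun v w hv hv' hw hw' => ?_) (fun w => ?_) hadj₂
  · have hv_u : u ∉ f ∪ {v, w} := by simp [huf, hv.symm, hw.symm]
    rw [linkGraph_stellarSub_adj_iff hu'f hv' hw', linkGraph_stellarSub_adj_iff huf hv hw,
      pair_subset_union_pair_iff hxf hyf hxy]
    exact and_iff_left fun h => hv_u (h (by simp))
  · by_cases hw : w = u'
    · simpa [hw] using ((hadj₂ u).2 (.inr rfl)).symm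
    have hx_sub : {x, u} ⊆ f ∪ {u, w} ↔ w = x := by
      simp [insert_subset_iff, hxf, hxu, eq_comm]
    rw [linkGraph_stellarSub_adj_iff hu'f huu' hw,
      linkGraph_stellarSub_adj_self_iff hK hu hf hcard hfe he, hx_sub, mem_insert, mem_singleton,
      or_iff_left hw]
    constructor
    · rintro ⟨h | h, hwx⟩
      exacts [absurd h hwx, h]
    · rintro rfl
      exact ⟨.inr rfl, hxy.symm⟩

end LinkGraph

theorem double_subdivision_restores_parity_general
    (K : Finset (Finset V)) (d : ℕ) (hpure : IsPure K d)
    (e : Finset V) (hecard : e.card = 2)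
    (u : V) (hu : u ∉ vertexSet K)
    (x : V) (hx : x ∈ e)
    (u' : V) (hu' : u' ∉ vertexSet (stellarSub K e u)) :
    ((stellarSub (stellarSub K e u) {x, u} u').filter
        (fun g => u ∉ g ∧ u' ∉ g) = K.filter fun g => ¬ e ⊆ g) ∧
    (∀ f ∈ K, f.card + 2 = d + 1 → (f ∪ e) ∈ K → (f ∪ e).card = d + 1 →
      (OddFace (stellarSub (stellarSub K e u) {x, u} u') f ↔ OddFace K f)) := by
  refine ⟨filter_stellarSub_stellarSub hu hu' (by simp), fun f _ hfcard hf hfecard => ?_⟩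
  obtain ⟨y, hxy, rfl⟩ := exists_eq_pair_of_mem hx hecard
  have hfe : Disjoint f {x, y} :=
    card_union_eq_card_add_card.1 (by rw [hfecard, card_pair hxy]; omega)
  have hdim : ∀ σ ∈ K, σ.card ≤ d + 1 := fun σ hσ => by
    obtain ⟨τ, -, hστ, hτ⟩ := hpure σ hσ
    exact hτ ▸ card_le_card hστ
  rw [oddFace_iff, oddFace_iff,
    nonempty_coloring_linkGraph_stellarSub_stellarSub_iff hdim hu hu' hxy hf hfecard hfe]

/-- Subdividing an edge `e` stellarly by `u` and then subdividing one of
the two half-edges `{x, u}` (for `x ∈ e`) by `u'` amounts to subdividing `e` into a path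
of three edges: away from the new vertices the complex agrees with `K` minus the faces
containing `e`, and the double subdivision restores the parity of every codimension-2
face `f` of `K` with `f ∪ e` a facet. -/
theorem double_subdivision_restores_parity
    (K : Finset (Finset V)) (d : ℕ) (hK : IsComplex K) (hpure : IsPure K d)
    (hlsc : LocallyStronglyConnected K d)
    (e : Finset V) (he : e ∈ K) (hecard : e.card = 2)
    (u : V) (hu : u ∉ vertexSet K)
    (x : V) (hx : x ∈ e)
    (u' : V) (hu' : u' ∉ vertexSet (stellarSub K e u))
    (he' : ({x, u} : Finset V) ∈ stellarSub K e u) :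
    ((stellarSub (stellarSub K e u) {x, u} u').filter
        (fun g => u ∉ g ∧ u' ∉ g) = K.filter fun g => ¬ e ⊆ g) ∧
    (∀ f ∈ K, f.card + 2 = d + 1 → (f ∪ e) ∈ K → (f ∪ e).card = d + 1 →
      (OddFace (stellarSub (stellarSub K e u) {x, u} u') f ↔ OddFace K f)) :=
  double_subdivision_restores_parity_general K d hpure e hecard u hu x hx u' hu'
end
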